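/- arXiv:2004.03477 — 2 statements merged into one kernel-verified Lean document; each statement's English description precedes it below -/
import Mathlib

section
/- (Proposition 1, completeness direction.) Let reach be the least relation on V × (Σ ∪ N)* × V closed under: (i) reach(x, ε, x) for every vertex x; (ii) reach(x, p, y) whenever p ∈ Σ and (x, p, y) ∈ D; (iii) reach(x, A, y) whenever A ∈ N, (A → α) ∈ P, and reach(x, α, y); (iv) reach(x, α₁α₂, y) whenever there is a vertex w with reach(x, α₁, w) and reach(w, α₂, y). Then for all vertices x, y, every string α over Σ ∪ N, and every terminal string s ∈ Σ*: if α ⇒* s and s ∈ traces(paths(x, y)), then reach(x, α, y). -/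
/-! Splitting a `Reach` witness along any factorisation `α₁ ++ α₂` shows that `Reach g D x · y` is
closed under inverting a production step `p A q ⇒ p γ q`, via rule (iii) on the middle factor.
Hence it is closed under inverting derivations, and the terminal string `s` itself is reached
along the path whose trace it is.
-/

/-- `HasTrace D x s y` : `s` is the trace of some path in the data graph `D` from `x` to `y`. -/
inductive HasTrace {V E : Type*} (D : Set (V × E × V)) : V → List E → V → Prop
  | nil (x : V) : HasTrace D x [] x
  | cons {x y z : V} {p : E} {s : List E} :
      (x, p, y) ∈ D → HasTrace D y s z → HasTrace D x (p :: s) z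


/-- The least relation `reach` of Proposition 1. -/
inductive Reach {T V : Type*} (g : ContextFreeGrammar T) (D : Set (V × T × V)) :
    V → List (Symbol T g.NT) → V → Prop
  | eps (x : V) : Reach g D x [] x
  | term {x y : V} {p : T} : (x, p, y) ∈ D → Reach g D x [Symbol.terminal p] y
  | nonterm {x y : V} {r : ContextFreeRule T g.NT} :
      r ∈ g.rules → Reach g D x r.output y → Reach g D x [Symbol.nonterminal r.input] y
  | concat {x w y : V} {α₁ α₂ : List (Symbol T g.NT)} :
      Reach g D x α₁ w → Reach g D w α₂ y → Reach g D x (α₁ ++ α₂) y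


namespace Reach

variable {T V : Type*} {g : ContextFreeGrammar T} {D : Set (V × T × V)} {x y : V}
  {α₁ α₂ : List (Symbol T g.NT)}

lemma exists_of_append_of_eq_nil_or_eq_nil (h : Reach g D x (α₁ ++ α₂) y)
    (hα : α₁ = [] ∨ α₂ = []) : ∃ w, Reach g D x α₁ w ∧ Reach g D w α₂ y := by
  rcases hα with rfl | rfl
  · exact ⟨x, eps x, h⟩
  · exact ⟨y, by simpa using h, eps y⟩

lemma exists_of_append (h : Reach g D x (α₁ ++ α₂) y) :
    ∃ w, Reach g D x α₁ w ∧ Reach g D w α₂ y := by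
  generalize hα : α₁ ++ α₂ = α at h
  induction h generalizing α₁ α₂ with
  | eps x =>
    refine exists_of_append_of_eq_nil_or_eq_nil (hα ▸ eps x) ?_
    exact .inl (List.append_eq_nil_iff.mp hα).1
  | term hD =>
    refine exists_of_append_of_eq_nil_or_eq_nil (hα ▸ term hD) ?_
    rcases List.append_eq_singleton_iff.mp hα with h | h <;> simp [h]
  | nonterm hr hout =>
    refine exists_of_append_of_eq_nil_or_eq_nil (hα ▸ nonterm hr hout) ?_
    rcases List.append_eq_singleton_iff.mp hα with h | h <;> simp [h]
  | concat h₁ h₂ ih₁ ih₂ =>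
    rcases List.append_eq_append_iff.mp hα with ⟨γ, rfl, rfl⟩ | ⟨γ, rfl, rfl⟩
    · obtain ⟨v, hv₁, hv₂⟩ := ih₁ rfl
      exact ⟨v, hv₁, concat hv₂ h₂⟩
    · obtain ⟨v, hv₁, hv₂⟩ := ih₂ rfl
      exact ⟨v, concat h₁ hv₁, hv₂⟩

theorem append_iff : Reach g D x (α₁ ++ α₂) y ↔ ∃ w, Reach g D x α₁ w ∧ Reach g D w α₂ y :=
  ⟨exists_of_append, fun ⟨_, h₁, h₂⟩ => concat h₁ h₂⟩

theorem of_produces {α β : List (Symbol T g.NT)} (hαβ : g.Produces α β) (h : Reach g D x β y) :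
    Reach g D x α y := by
  obtain ⟨r, hr, hrw⟩ := hαβ
  obtain ⟨p, q, rfl, rfl⟩ := hrw.exists_parts
  obtain ⟨w₂, h', hq⟩ := append_iff.mp h
  obtain ⟨w₁, hp, hout⟩ := append_iff.mp h'
  exact concat (concat hp (nonterm hr hout)) hq

theorem of_derives {α β : List (Symbol T g.NT)} (hαβ : g.Derives α β) (h : Reach g D x β y) :
    Reach g D x α y := by
  induction hαβ using Relation.ReflTransGen.head_induction_on with
  | refl => exact h
  | head hstep _ ih => exact of_produces hstep ih

theorem of_hasTrace {s : List T} (h : HasTrace D x s y) :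
    Reach g D x (s.map Symbol.terminal) y := by
  induction h with
  | nil x => exact eps x
  | cons hD _ ih => exact concat (term hD) ih

end Reach

theorem reach_complete {T V : Type*} (g : ContextFreeGrammar T) (D : Set (V × T × V)) :
    ∀ (x y : V) (α : List (Symbol T g.NT)) (s : List T),
      g.Derives α (s.map Symbol.terminal) → HasTrace D x s y → Reach g D x α y :=
  fun _ _ _ _ hα hs => Reach.of_derives hα (Reach.of_hasTrace hs)
end

section
/- (Proposition 1, soundness direction.) Let reach be the least relation on V × (Σ ∪ N)* × V closed under: (i) reach(x, ε, x) for every vertex x; (ii) reach(x, p, y) whenever p ∈ Σ and (x, p, y) ∈ D; (iii) reach(x, A, y) whenever A ∈ N, (A → α) ∈ P, and reach(x, α, y); (iv) reach(x, α₁α₂, y) whenever there is a vertex w with reach(x, α₁, w) and reach(w, α₂, y). Then for all vertices x, y and every string α over Σ ∪ N: if reach(x, α, y), then there exists a terminal string s ∈ Σ* such that α ⇒* s and s ∈ traces(paths(x, y)). -/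
namespace HasTrace

variable {V E : Type*} {D : Set (V × E × V)}

theorem single {x y : V} {p : E} (h : (x, p, y) ∈ D) : HasTrace D x [p] y :=
  cons h (nil y)

theorem append {x y z : V} {s t : List E} (hs : HasTrace D x s y) (ht : HasTrace D y t z) :
    HasTrace D x (s ++ t) z := by
  induction hs with
  | nil => exact ht
  | cons hxy _ ih => exact cons hxy (ih ht)

end HasTrace

namespace ContextFreeGrammar

variable {T : Type*} {g : ContextFreeGrammar T}

theorem produces_of_mem_rules {r : ContextFreeRule T g.NT} (hr : r ∈ g.rules) :
    g.Produces [.nonterminal r.input] r.output :=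
  ⟨r, hr, ContextFreeRule.Rewrites.input_output⟩

theorem Derives.append {u u' v v' : List (Symbol T g.NT)} (hu : g.Derives u u')
    (hv : g.Derives v v') : g.Derives (u ++ v) (u' ++ v') :=
  (hu.append_right v).trans (hv.append_left u')

end ContextFreeGrammar

theorem reach_sound {T V : Type*} (g : ContextFreeGrammar T) (D : Set (V × T × V)) :
    ∀ (x y : V) (α : List (Symbol T g.NT)),
      Reach g D x α y →
        ∃ s : List T, g.Derives α (s.map Symbol.terminal) ∧ HasTrace D x s y := by
  intro x y α h
  induction h with
  | eps x => exact ⟨[], .refl _, .nil x⟩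
  | term hxy => exact ⟨[_], .refl _, .single hxy⟩
  | nonterm hr _ ih =>
    obtain ⟨s, hderiv, htrace⟩ := ih
    exact ⟨s, (ContextFreeGrammar.produces_of_mem_rules hr).trans_derives hderiv, htrace⟩
  | concat _ _ ih₁ ih₂ =>
    obtain ⟨s₁, hderiv₁, htrace₁⟩ := ih₁
    obtain ⟨s₂, hderiv₂, htrace₂⟩ := ih₂
    refine ⟨s₁ ++ s₂, ?_, htrace₁.append htrace₂⟩
    rw [List.map_append]
    exact hderiv₁.append hderiv₂
end
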